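/- arXiv:2503.03659 — 2 statements merged into one kernel-verified Lean document; each statement's English description precedes it below -/
import Mathlib

section
/- Let n ≥ 1 and let (μ_1, …, μ_{n+1}) be a random vector in ℝ^{n+1} whose joint law is invariant under every permutation of its n+1 coordinates, and assume that almost surely the values μ_1, …, μ_{n+1} are pairwise distinct. Then the random variable pl = (n+1)^{-1} #{i ∈ {1,…,n+1} : μ_i ≥ μ_{n+1}} is uniformly distributed on the finite set {1/(n+1), 2/(n+1), …, 1}; that is, P(pl = k/(n+1)) = 1/(n+1) for each k ∈ {1, …, n+1}. -/
open MeasureTheory Finset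
open scoped ENNReal

/-! If the coordinates of an exchangeable random vector are almost surely distinct, then for each
`k` exactly one coordinate has rank `k` (counted from the top), and by exchangeability every
coordinate is equally likely to be that one; so each has rank `k` with probability `1/(n+1)`. -/

section Rank

variable {ι α : Type*} [Fintype ι] [LinearOrder α]

def upperRank (v : ι → α) (j : ι) : ℕ :=
  #{i | v j ≤ v i}

lemma upperRank_comp_perm (v : ι → α) (σ : Equiv.Perm ι) (j : ι) :
    upperRank (v ∘ σ) j = upperRank v (σ j) := by
  simp only [upperRank, Function.comp_apply]
  exact card_bij (fun i _ => σ i) (by simp) (by simp) (fun i hi => ⟨σ.symm i, by simpa using hi⟩)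

lemma upperRank_lt_of_lt {v : ι → α} {j j' : ι} (h : v j < v j') :
    upperRank v j' < upperRank v j := by
  refine card_lt_card ((ssubset_iff_of_subset fun i hi => ?_).2 ⟨j, by simp, by simpa using h⟩)
  simp only [mem_filter, mem_univ, true_and] at hi ⊢
  exact h.le.trans hi

lemma upperRank_injective {v : ι → α} (hv : Function.Injective v) :
    Function.Injective (upperRank v) := by
  intro a b hab
  by_contra hne
  rcases (hv.ne hne).lt_or_gt with h | h
  · exact (upperRank_lt_of_lt h).ne' hab
  · exact (upperRank_lt_of_lt h).ne hab

lemma upperRank_mem_Icc (v : ι → α) (j : ι) : upperRank v j ∈ Icc 1 (Fintype.card ι) :=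
  mem_Icc.2 ⟨card_pos.2 ⟨j, by simp⟩, card_filter_le _ _⟩

lemma image_upperRank {v : ι → α} (hv : Function.Injective v) :
    univ.image (upperRank v) = Icc 1 (Fintype.card ι) := by
  refine eq_of_subset_of_card_le (fun x hx => ?_) ?_
  · obtain ⟨j, -, rfl⟩ := mem_image.1 hx
    exact upperRank_mem_Icc v j
  · rw [Nat.card_Icc, card_image_of_injective _ (upperRank_injective hv), card_univ]
    omega

lemma card_upperRank_eq {v : ι → α} (hv : Function.Injective v) {k : ℕ}
    (hk : k ∈ Icc 1 (Fintype.card ι)) : #{j | upperRank v j = k} = 1 := by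
  rw [← image_upperRank hv] at hk
  obtain ⟨j, -, rfl⟩ := mem_image.1 hk
  rw [card_eq_one]
  exact ⟨j, by ext i; simpa using (upperRank_injective hv).eq_iff⟩

end Rank

section Exchangeable

variable {Ω ι α : Type*} [MeasurableSpace Ω] [Fintype ι] [LinearOrder α] [TopologicalSpace α]
  [OrderClosedTopology α] [SecondCountableTopology α] [MeasurableSpace α] [OpensMeasurableSpace α]

lemma measurableSet_upperRank_eq (j : ι) (k : ℕ) :
    MeasurableSet {v : ι → α | upperRank v j = k} := by
  have : Measurable fun v : ι → α => upperRank v j := by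
    simp only [upperRank, card_filter]
    exact Finset.measurable_sum _ fun i _ => Measurable.ite
      (measurableSet_le (measurable_pi_apply j) (measurable_pi_apply i))
      measurable_const measurable_const
  exact this (measurableSet_singleton k)

lemma measure_upperRank_eq_of_exchangeable [DecidableEq ι] (ℙ : Measure Ω) {X : Ω → ι → α}
    (hX : Measurable X) (hexch : ∀ σ : Equiv.Perm ι, ℙ.map (fun ω => X ω ∘ σ) = ℙ.map X)
    (i j : ι) (k : ℕ) :
    ℙ {ω | upperRank (X ω) i = k} = ℙ {ω | upperRank (X ω) j = k} := by
  have hXσ : Measurable fun ω => X ω ∘ Equiv.swap i j :=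
    measurable_pi_iff.2 fun l => (measurable_pi_apply _).comp hX
  have h := congrArg (· {v | upperRank v j = k}) (hexch (Equiv.swap i j))
  simp only [Measure.map_apply hXσ (measurableSet_upperRank_eq j k),
    Measure.map_apply hX (measurableSet_upperRank_eq j k)] at h
  simpa [Set.preimage, upperRank_comp_perm] using h

lemma sum_measure_upperRank_eq (ℙ : Measure Ω) [IsProbabilityMeasure ℙ] {X : Ω → ι → α}
    (hX : Measurable X) (hinj : ∀ᵐ ω ∂ℙ, Function.Injective (X ω)) {k : ℕ}
    (hk : k ∈ Icc 1 (Fintype.card ι)) :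
    ∑ j, ℙ {ω | upperRank (X ω) j = k} = 1 := by
  have hmeas : ∀ j, MeasurableSet {ω | upperRank (X ω) j = k} := fun j =>
    hX (measurableSet_upperRank_eq j k)
  have hcount : (fun ω => ∑ j, {ω | upperRank (X ω) j = k}.indicator (1 : Ω → ℝ≥0∞) ω) =ᵐ[ℙ] 1 := by
    filter_upwards [hinj] with ω hω
    simp only [Set.indicator_apply, Set.mem_ofPred_eq, Pi.one_apply, sum_boole,
      card_upperRank_eq hω hk, Nat.cast_one]
  calc ∑ j, ℙ {ω | upperRank (X ω) j = k}
      = ∫⁻ ω, ∑ j, {ω | upperRank (X ω) j = k}.indicator 1 ω ∂ℙ := by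
        rw [lintegral_finsetSum _ fun j _ => measurable_one.indicator (hmeas j)]
        simp only [lintegral_indicator_one (hmeas _)]
    _ = 1 := by rw [lintegral_congr_ae hcount]; simp

theorem measure_upperRank_eq_inv_card [DecidableEq ι] (ℙ : Measure Ω) [IsProbabilityMeasure ℙ]
    {X : Ω → ι → α} (hX : Measurable X)
    (hexch : ∀ σ : Equiv.Perm ι, ℙ.map (fun ω => X ω ∘ σ) = ℙ.map X)
    (hinj : ∀ᵐ ω ∂ℙ, Function.Injective (X ω)) (j : ι) {k : ℕ}
    (hk : k ∈ Icc 1 (Fintype.card ι)) :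
    ℙ {ω | upperRank (X ω) j = k} = (Fintype.card ι : ℝ≥0∞)⁻¹ := by
  have h := sum_measure_upperRank_eq ℙ hX hinj hk
  simp only [measure_upperRank_eq_of_exchangeable ℙ hX hexch _ j k, sum_const, card_univ,
    nsmul_eq_mul] at h
  exact ENNReal.eq_inv_of_mul_eq_one_left (by rw [mul_comm, h])

end Exchangeable

theorem conformal_plausibility_uniform_general {Ω : Type*} [MeasurableSpace Ω]
    (ℙ : Measure Ω) [IsProbabilityMeasure ℙ]
    (n : ℕ) (μ : Ω → Fin (n + 1) → ℝ) (hμ : Measurable μ)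
    (hexch : ∀ σ : Equiv.Perm (Fin (n + 1)),
      Measure.map (fun ω => μ ω ∘ σ) ℙ = Measure.map μ ℙ)
    (hdist : ∀ᵐ ω ∂ℙ, Function.Injective (μ ω))
    (k : ℕ) (hk1 : 1 ≤ k) (hk2 : k ≤ n + 1) :
    ℙ {ω | ((univ.filter (fun i : Fin (n + 1) => μ ω (Fin.last n) ≤ μ ω i)).card : ℝ) / (n + 1)
        = (k : ℝ) / (n + 1)} = 1 / (n + 1) := by
  have hne : ((n : ℝ) + 1) ≠ 0 := by positivity
  simp only [div_left_inj' hne, Nat.cast_inj]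
  have h := measure_upperRank_eq_inv_card ℙ hμ hexch hdist (Fin.last n)
    (k := k) (by simpa using ⟨hk1, hk2⟩)
  simpa [upperRank] using h

/-- If `(μ_1, …, μ_{n+1})` is exchangeable and almost surely has pairwise
distinct coordinates, then the plausibility `pl = (n+1)⁻¹ #{i : μ_i ≥ μ_{n+1}}` is
uniformly distributed on `{1/(n+1), …, 1}`: `P(pl = k/(n+1)) = 1/(n+1)` for `1 ≤ k ≤ n+1`. -/
theorem conformal_plausibility_uniform {Ω : Type*} [MeasurableSpace Ω]
    (ℙ : Measure Ω) [IsProbabilityMeasure ℙ]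
    (n : ℕ) (hn : 1 ≤ n) (μ : Ω → Fin (n + 1) → ℝ) (hμ : Measurable μ)
    (hexch : ∀ σ : Equiv.Perm (Fin (n + 1)),
      Measure.map (fun ω => μ ω ∘ σ) ℙ = Measure.map μ ℙ)
    (hdist : ∀ᵐ ω ∂ℙ, Function.Injective (μ ω))
    (k : ℕ) (hk1 : 1 ≤ k) (hk2 : k ≤ n + 1) :
    ℙ {ω | ((univ.filter (fun i : Fin (n + 1) => μ ω (Fin.last n) ≤ μ ω i)).card : ℝ) / (n + 1)
        = (k : ℝ) / (n + 1)} = 1 / (n + 1) :=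
  conformal_plausibility_uniform_general ℙ n μ hμ hexch hdist k hk1 hk2
end

section
/- Let n ≥ 1, let Z_1, …, Z_{n+1} be random variables taking values in a measurable space 𝒵 whose joint law is invariant under every permutation of the n+1 coordinates, and let M : 𝒵^n × 𝒵 → ℝ be a measurable function invariant under permutations of its first argument. Define μ_j = M((Z_i)_{i ≠ j}, Z_j) for j = 1, …, n+1 and the plausibility pl = (n+1)^{-1} Σ_{i=1}^{n+1} 1{μ_i ≥ μ_{n+1}}. For α ∈ (0,1), set t_n(α) = ⌊(n+1)α⌋/(n+1). Then P( pl ≤ t_n(α) ) ≤ α for every n ≥ 1 and every α ∈ (0,1). -/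
open MeasureTheory Finset

/-- Combinatorial rank bound: at most `k` indices `j` have at most `k` values `≥ v j`. -/
lemma cp_count_bound {m : ℕ} (v : Fin m → ℝ) (k : ℕ) :
    (univ.filter (fun j => (univ.filter (fun i => v j ≤ v i)).card ≤ k)).card ≤ k := by
  set S := univ.filter (fun j => (univ.filter (fun i : Fin m => v j ≤ v i)).card ≤ k) with hS
  rcases S.eq_empty_or_nonempty with h | h
  · simp [h]
  · obtain ⟨j0, hj0S, hj0min⟩ := S.exists_min_image v h
    have hsub : S ⊆ univ.filter (fun i => v j0 ≤ v i) := by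
      intro j hj
      simp only [mem_filter, mem_univ, true_and]
      exact hj0min j hj
    have h1 := Finset.card_le_card hsub
    have hj0 : (univ.filter (fun i : Fin m => v j0 ≤ v i)).card ≤ k := by
      rw [hS] at hj0S
      exact (mem_filter.mp hj0S).2
    omega

/-- The permutation induced on the complement of a point via `succAbove`. -/
lemma cp_succAbove_perm {n : ℕ} (σ : Equiv.Perm (Fin (n + 1))) (j : Fin (n + 1)) :
    ∃ τ : Equiv.Perm (Fin n), ∀ i, σ (j.succAbove i) = (σ j).succAbove (τ i) := by
  set E : Option (Fin n) ≃ Option (Fin n) :=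
    (finSuccEquiv' j).symm.trans (σ.trans (finSuccEquiv' (σ j))) with hE
  refine ⟨E.removeNone, fun i => ?_⟩
  have hEi : E (some i) = finSuccEquiv' (σ j) (σ (j.succAbove i)) := by
    simp [hE, Equiv.trans_apply, finSuccEquiv'_symm_some]
  have hne : σ (j.succAbove i) ≠ σ j := fun h =>
    (Fin.succAbove_ne j i) (σ.injective h)
  have hsome : ∃ y, E (some i) = some y := by
    rw [hEi]
    rcases h : finSuccEquiv' (σ j) (σ (j.succAbove i)) with _ | y
    · exfalso
      apply hne
      have := congrArg (finSuccEquiv' (σ j)).symm h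
      simpa [finSuccEquiv'_symm_none] using this
    · exact ⟨y, rfl⟩
  have h2 := Equiv.removeNone_some E hsome
  have h3 := congrArg (finSuccEquiv' (σ j)).symm (h2.trans hEi)
  simpa [finSuccEquiv'_symm_some] using h3.symm

/-- Reindexing a filtered count by a permutation. -/
lemma cp_filter_perm {m : ℕ} (σ : Equiv.Perm (Fin m)) (p : Fin m → Prop) [DecidablePred p] :
    (univ.filter (fun i => p (σ i))).card = (univ.filter p).card := by
  apply Finset.card_equiv σ
  intro i
  simp

/-- finite-sample validity of conformal prediction (Theorem 1 of the paper).
For exchangeable data, a permutation-invariant measurable nonconformity measure `M`, scores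
`μ_j = M((Z_i)_{i ≠ j}, Z_j)`, plausibility `pl = (n+1)⁻¹ Σ 1{μ_i ≥ μ_{n+1}}`, and
`t_n(α) = ⌊(n+1)α⌋/(n+1)`, one has `P(pl ≤ t_n(α)) ≤ α` for all `n ≥ 1`, `α ∈ (0,1)`. -/
theorem conformal_finite_sample_validity {Ω 𝒵 : Type*} [MeasurableSpace Ω]
    [MeasurableSpace 𝒵] (ℙ : Measure Ω) [IsProbabilityMeasure ℙ]
    (n : ℕ) (hn : 1 ≤ n) (α : ℝ) (hα : α ∈ Set.Ioo (0 : ℝ) 1)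
    (Z : Ω → Fin (n + 1) → 𝒵) (hZ : Measurable Z)
    (hexch : ∀ σ : Equiv.Perm (Fin (n + 1)),
      Measure.map (fun ω => Z ω ∘ σ) ℙ = Measure.map Z ℙ)
    (M : (Fin n → 𝒵) → 𝒵 → ℝ) (hM : Measurable (Function.uncurry M))
    (hMinv : ∀ (σ : Equiv.Perm (Fin n)) (b : Fin n → 𝒵) (z : 𝒵), M (b ∘ σ) z = M b z)
    (μ : Ω → Fin (n + 1) → ℝ)
    (hμdef : ∀ ω j, μ ω j = M (fun i => Z ω (j.succAbove i)) (Z ω j))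
    (pl : Ω → ℝ)
    (hpl : ∀ ω, pl ω =
      ((univ.filter (fun i : Fin (n + 1) => μ ω (Fin.last n) ≤ μ ω i)).card : ℝ) / (n + 1)) :
    ℙ {ω | pl ω ≤ (⌊((n : ℝ) + 1) * α⌋ : ℝ) / (n + 1)} ≤ ENNReal.ofReal α := by
  obtain ⟨hα0, hα1⟩ := hα
  have hnpos : (0 : ℝ) < (n : ℝ) + 1 := by positivity
  -- the integer threshold
  set k : ℕ := (⌊((n : ℝ) + 1) * α⌋).toNat with hk
  have hfloor0 : 0 ≤ ⌊((n : ℝ) + 1) * α⌋ := Int.floor_nonneg.2 (by positivity)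
  have hkfloor : (⌊((n : ℝ) + 1) * α⌋ : ℝ) = (k : ℝ) := by
    rw [hk]
    exact_mod_cast (Int.toNat_of_nonneg hfloor0).symm
  have hkle : (k : ℝ) ≤ ((n : ℝ) + 1) * α := by
    rw [← hkfloor]; exact Int.floor_le _
  -- scores as a function of the data vector
  set g : Fin (n + 1) → (Fin (n + 1) → 𝒵) → ℝ :=
    fun j z => M (fun i => z (j.succAbove i)) (z j) with hg
  have hgmeas : ∀ j, Measurable (g j) := by
    intro j
    have hpair : Measurable (fun z : Fin (n + 1) → 𝒵 =>
        ((fun i => z (j.succAbove i), z j) : (Fin n → 𝒵) × 𝒵)) :=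
      Measurable.prodMk (measurable_pi_lambda _ fun i => measurable_pi_apply _)
        (measurable_pi_apply _)
    exact hM.comp hpair
  have hμg : ∀ ω i, μ ω i = g i (Z ω) := fun ω i => hμdef ω i
  -- score symmetry under permutations
  have hgperm : ∀ (σ : Equiv.Perm (Fin (n + 1))) (j : Fin (n + 1)) (z : Fin (n + 1) → 𝒵),
      g j (z ∘ σ) = g (σ j) z := by
    intro σ j z
    obtain ⟨τ, hτ⟩ := cp_succAbove_perm σ j
    have hb : (fun i => (z ∘ σ) (j.succAbove i)) = (fun i => z ((σ j).succAbove i)) ∘ τ := by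
      funext i
      simp [Function.comp, hτ i]
    simp only [hg, hb, hMinv]
    rfl
  -- the counting functions and events
  set c : Fin (n + 1) → (Fin (n + 1) → 𝒵) → ℕ :=
    fun j z => (univ.filter (fun i => g j z ≤ g i z)).card with hc
  have hcperm : ∀ (σ : Equiv.Perm (Fin (n + 1))) (j : Fin (n + 1)) (z : Fin (n + 1) → 𝒵),
      c j (z ∘ σ) = c (σ j) z := by
    intro σ j z
    simp only [hc]
    have h1 : ∀ i, g i (z ∘ σ) = g (σ i) z := fun i => hgperm σ i z
    calc (univ.filter (fun i => g j (z ∘ σ) ≤ g i (z ∘ σ))).card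
        = (univ.filter (fun i => g (σ j) z ≤ g (σ i) z)).card := by
          congr 1
          apply Finset.filter_congr
          intro i _
          rw [h1 i, h1 j]
      _ = (univ.filter (fun i => g (σ j) z ≤ g i z)).card :=
          cp_filter_perm σ (fun i => g (σ j) z ≤ g i z)
  have hcmeas : ∀ j, Measurable (c j) := by
    intro j
    have hrw : c j = fun z => ∑ i : Fin (n + 1), if g j z ≤ g i z then 1 else 0 := by
      funext z
      simp only [hc]
      rw [Finset.card_filter]
    rw [hrw]
    exact Finset.measurable_sum _ fun i _ =>
      Measurable.ite (measurableSet_le (hgmeas j) (hgmeas i)) measurable_const measurable_const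
  set A : Fin (n + 1) → Set (Fin (n + 1) → 𝒵) := fun j => {z | c j z ≤ k} with hA
  have hAmeas : ∀ j, MeasurableSet (A j) := by
    intro j
    have hAe : A j = c j ⁻¹' {m | m ≤ k} := rfl
    rw [hAe]
    exact (hcmeas j) ((Set.to_countable _).measurableSet)
  -- identify the event
  have hEvent : {ω | pl ω ≤ (⌊((n : ℝ) + 1) * α⌋ : ℝ) / (n + 1)} = Z ⁻¹' A (Fin.last n) := by
    ext ω
    simp only [Set.mem_setOf_eq, Set.mem_preimage, hA, hpl ω, hkfloor]
    have hfe : (univ.filter (fun i : Fin (n + 1) => μ ω (Fin.last n) ≤ μ ω i)) =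
        (univ.filter (fun i => g (Fin.last n) (Z ω) ≤ g i (Z ω))) := by
      apply Finset.filter_congr
      intro i _
      rw [hμg ω i, hμg ω (Fin.last n)]
    rw [hfe, div_le_div_iff_of_pos_right hnpos]
    simp only [hc, Set.mem_setOf_eq]
    exact_mod_cast Iff.rfl
  -- all events have the same probability
  have hsame : ∀ j, ℙ (Z ⁻¹' A j) = ℙ (Z ⁻¹' A (Fin.last n)) := by
    intro j
    set σ := Equiv.swap (Fin.last n) j with hσ
    have hZσ : Measurable (fun ω => Z ω ∘ σ) :=
      measurable_pi_lambda _ fun i => (measurable_pi_apply _).comp hZ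
    have h1 : ℙ (Z ⁻¹' A (Fin.last n)) = Measure.map Z ℙ (A (Fin.last n)) :=
      (Measure.map_apply hZ (hAmeas _)).symm
    rw [h1, ← hexch σ, Measure.map_apply hZσ (hAmeas _)]
    congr 1
    ext ω
    simp only [Set.mem_preimage, hA, Set.mem_setOf_eq]
    rw [hcperm σ (Fin.last n) (Z ω)]
    have : σ (Fin.last n) = j := Equiv.swap_apply_left _ _
    rw [this]
  -- the sum of the probabilities is at most k
  classical
  have hpt : ∀ ω, ∑ j : Fin (n + 1), Set.indicator (Z ⁻¹' A j) (1 : Ω → ENNReal) ω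
      ≤ (k : ENNReal) := by
    intro ω
    have heq : ∀ j : Fin (n + 1), Set.indicator (Z ⁻¹' A j) (1 : Ω → ENNReal) ω =
        if c j (Z ω) ≤ k then 1 else 0 := by
      intro j
      by_cases h : c j (Z ω) ≤ k
      · rw [Set.indicator_of_mem (show ω ∈ Z ⁻¹' A j from h), if_pos h]
        rfl
      · rw [Set.indicator_of_notMem (show ω ∉ Z ⁻¹' A j from h), if_neg h]
    calc ∑ j : Fin (n + 1), Set.indicator (Z ⁻¹' A j) (1 : Ω → ENNReal) ω
        = ∑ j : Fin (n + 1), if c j (Z ω) ≤ k then (1 : ENNReal) else 0 :=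
          Finset.sum_congr rfl fun j _ => heq j
      _ = ((univ.filter (fun j : Fin (n + 1) => c j (Z ω) ≤ k)).card : ENNReal) := by
          rw [Finset.card_filter, Nat.cast_sum]
          exact Finset.sum_congr rfl fun j _ => by split <;> simp
      _ ≤ (k : ENNReal) := by
          have hb : (univ.filter (fun j : Fin (n + 1) => c j (Z ω) ≤ k)).card ≤ k := by
            simp only [hc]
            exact cp_count_bound (fun j => g j (Z ω)) k
          exact_mod_cast hb
  have hsum : ∑ j : Fin (n + 1), ℙ (Z ⁻¹' A j) ≤ (k : ENNReal) := by
    have hind : ∀ j, ℙ (Z ⁻¹' A j) = ∫⁻ ω, Set.indicator (Z ⁻¹' A j) (1 : Ω → ENNReal) ω ∂ℙ :=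
      fun j => (lintegral_indicator_one (hZ (hAmeas j))).symm
    have hmeas : ∀ j ∈ (univ : Finset (Fin (n + 1))),
        Measurable (fun ω => Set.indicator (Z ⁻¹' A j) (1 : Ω → ENNReal) ω) :=
      fun j _ => measurable_one.indicator (hZ (hAmeas j))
    calc ∑ j : Fin (n + 1), ℙ (Z ⁻¹' A j)
        = ∑ j : Fin (n + 1), ∫⁻ ω, Set.indicator (Z ⁻¹' A j) (1 : Ω → ENNReal) ω ∂ℙ :=
          Finset.sum_congr rfl fun j _ => hind j
      _ = ∫⁻ ω, ∑ j : Fin (n + 1), Set.indicator (Z ⁻¹' A j) (1 : Ω → ENNReal) ω ∂ℙ :=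
          (lintegral_finset_sum _ hmeas).symm
      _ ≤ ∫⁻ _, (k : ENNReal) ∂ℙ := lintegral_mono fun ω => hpt ω
      _ = (k : ENNReal) := by simp
  -- conclude
  have hconst : ∑ j : Fin (n + 1), ℙ (Z ⁻¹' A j) =
      ((n : ENNReal) + 1) * ℙ (Z ⁻¹' A (Fin.last n)) := by
    rw [Finset.sum_congr rfl fun j _ => hsame j, Finset.sum_const, Finset.card_univ,
      Fintype.card_fin, nsmul_eq_mul]
    push_cast
    ring
  rw [hEvent]
  have hmul : ((n : ENNReal) + 1) * ℙ (Z ⁻¹' A (Fin.last n)) ≤ (k : ENNReal) := by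
    rw [← hconst]; exact hsum
  have hdiv : ℙ (Z ⁻¹' A (Fin.last n)) ≤ (k : ENNReal) / ((n : ENNReal) + 1) := by
    rw [ENNReal.le_div_iff_mul_le (Or.inl (by simp)) (Or.inl (by simp))]
    rw [mul_comm]
    exact hmul
  refine hdiv.trans ?_
  have h1 : (k : ENNReal) = ENNReal.ofReal (k : ℝ) := by
    simp
  have h2 : ((n : ENNReal) + 1) = ENNReal.ofReal ((n : ℝ) + 1) := by
    rw [ENNReal.ofReal_add (by positivity) (by norm_num)]
    simp
  rw [h1, h2, ← ENNReal.ofReal_div_of_pos hnpos]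
  apply ENNReal.ofReal_le_ofReal
  rw [div_le_iff₀ hnpos, mul_comm]
  exact hkle
end
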